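/- arXiv:2402.01896 — 2 statements merged into one kernel-verified Lean document; each statement's English description precedes it below -/
import Mathlib

section
/- Let a ∈ ℂ with -1 < Re a < 0, ε > 0, and x ∈ ℝ. Then ∫₀^∞ y^a/(x - y + iε) dy = (π/ sin(πa)) · e^{-iπa} · (x + iε)^a, where (x+iε)^a = exp(a Log(x+iε)) with Log the principal branch of the logarithm on ℂ ∖ (-∞, 0]. -/
/-!
For `z` off the ray `[0, ∞)` the integral `G(z) = ∫₀^∞ y^a / (z - y) dy` is holomorphic:
differentiate under the integral sign, dominating by `y^(Re a) / (1 + y)^n`, since locally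
`‖z - y‖ ≥ c (1 + y)`. On the negative axis `z = -c` the substitution `y = c u` gives
`G(-c) = -c^a ∫₀^∞ u^a / (1 + u) du`, and `u = t / (1 - t)` turns the last integral into
`B(a + 1, -a) = Γ(a + 1) Γ(-a) = -π / sin(π a)`. Both `G` and `z ↦ π / sin(π a) · (-z)^a` are
holomorphic on the connected set `-slitPlane`, so the identity theorem gives equality there.
Finally, for `Im z > 0` we have `arg(-z) = arg z - π`, whence `(-z)^a = e^{-iπa} z^a`.
-/

open Complex MeasureTheory Set Metric Filter Topology
open scoped Real

/-- The convolution `(h_ε * x₊^a)(x)` is `cauchyTransformCpow a (x + iε)`. -/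
noncomputable def cauchyTransformCpow (a z : ℂ) : ℂ :=
  ∫ y in Ioi (0 : ℝ), (y : ℂ) ^ a / (z - y)

lemma integrableOn_Ioi_rpow_div_one_add_pow {s : ℝ} {n : ℕ} (hs : -1 < s) (hn : s - n < -1) :
    IntegrableOn (fun y : ℝ => y ^ s / (1 + y) ^ n) (Ioi 0) := by
  have hcont : ContinuousOn (fun y : ℝ => y ^ s / (1 + y) ^ n) (Ioi 0) :=
    (continuousOn_id.rpow_const fun y hy => Or.inl (ne_of_gt hy)).div (by fun_prop)
      fun y (hy : 0 < y) => by positivity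
  rw [← Ioc_union_Ioi_eq_Ioi zero_le_one]
  refine IntegrableOn.union ?_ ?_
  · refine (intervalIntegral.intervalIntegrable_rpow' hs (a := 0) (b := 1)).1.mono'
      (hcont.mono Ioc_subset_Ioi_self |>.aestronglyMeasurable measurableSet_Ioc) ?_
    filter_upwards [ae_restrict_mem measurableSet_Ioc] with y hy
    have hy0 : 0 < y := hy.1
    rw [Real.norm_of_nonneg (by positivity)]
    exact div_le_self (by positivity) (one_le_pow₀ (by linarith))
  · refine (integrableOn_Ioi_rpow_of_lt hn zero_lt_one).mono'
      (hcont.mono (Ioi_subset_Ioi zero_le_one) |>.aestronglyMeasurable measurableSet_Ioi) ?_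
    filter_upwards [ae_restrict_mem measurableSet_Ioi] with y (hy : 1 < y)
    rw [Real.norm_of_nonneg (by positivity), Real.rpow_sub_natCast (by positivity)]
    gcongr
    linarith

lemma exists_ball_mul_one_add_le_norm_sub_ofReal {z₀ : ℂ} (hz₀ : -z₀ ∈ slitPlane) :
    ∃ r > 0, ∃ c > 0, ∀ z ∈ ball z₀ r, ∀ y : ℝ, 0 ≤ y → c * (1 + y) ≤ ‖z - y‖ := by
  obtain ⟨δ, hδ, hball⟩ := Metric.isOpen_iff.mp isOpen_slitPlane.neg z₀ (Set.mem_neg.mpr hz₀)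
  have hfar : ∀ z ∈ ball z₀ (δ / 2), ∀ y : ℝ, 0 ≤ y → δ / 2 ≤ ‖z - y‖ := by
    intro z hz y hy
    by_contra! h
    have hy' : (y : ℂ) ∈ ball z₀ δ := by
      rw [mem_ball, dist_eq_norm] at hz ⊢
      calc ‖(y : ℂ) - z₀‖ ≤ ‖z - y‖ + ‖z - z₀‖ := by
            rw [norm_sub_rev z]; exact norm_sub_le_norm_sub_add_norm_sub _ _ _
        _ < δ := by linarith
    exact (neg_ofReal_mem_slitPlane.mp (Set.mem_neg.mp (hball hy'))).not_ge hy
  set M := ‖z₀‖ + δ / 2 with hM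
  -- `1 + y = (1 + M) + (y - M)`, and `‖z - y‖` dominates both `δ / 2` and `y - M`.
  refine ⟨δ / 2, by positivity, δ / 2 / (1 + M + δ / 2), by positivity, fun z hz y hy => ?_⟩
  have hnear : y - M ≤ ‖z - y‖ := by
    have hz' : ‖z‖ ≤ ‖z₀‖ + ‖z - z₀‖ := by
      simpa using norm_add_le z₀ (z - z₀)
    have := norm_sub_norm_le (y : ℂ) z
    rw [norm_sub_rev, Complex.norm_real, Real.norm_of_nonneg hy] at this
    rw [mem_ball, dist_eq_norm] at hz
    linarith
  have := hfar z hz y hy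
  rw [div_mul_eq_mul_div, div_le_iff₀ (by positivity)]
  nlinarith [mul_le_mul_of_nonneg_right this (by positivity : 0 ≤ 1 + M),
    mul_le_mul_of_nonneg_left hnear (by positivity : 0 ≤ δ / 2)]

lemma differentiableAt_cauchyTransformCpow {a z₀ : ℂ} (h1 : -1 < a.re) (h2 : a.re < 0)
    (hz₀ : -z₀ ∈ slitPlane) : DifferentiableAt ℂ (cauchyTransformCpow a) z₀ := by
  obtain ⟨r, hr, c, hc, hbd⟩ := exists_ball_mul_one_add_le_norm_sub_ofReal hz₀
  have hne : ∀ z ∈ ball z₀ r, ∀ y ∈ Ioi (0 : ℝ), z - y ≠ 0 := fun z hz y (hy : 0 < y) h => by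
    have := hbd z hz y hy.le
    rw [h, norm_zero] at this
    nlinarith
  have hcpow : ContinuousOn (fun y : ℝ => (y : ℂ) ^ a) (Ioi 0) :=
    continuous_ofReal.continuousOn.cpow_const fun y hy => ofReal_mem_slitPlane.mpr hy
  have hdom : ∀ n : ℕ, ∀ z ∈ ball z₀ r, ∀ y ∈ Ioi (0 : ℝ),
      ‖(y : ℂ) ^ a / (z - y) ^ n‖ ≤ (c ^ n)⁻¹ * (y ^ a.re / (1 + y) ^ n) := by
    intro n z hz y (hy : 0 < y)
    calc ‖(y : ℂ) ^ a / (z - y) ^ n‖ = y ^ a.re / ‖z - y‖ ^ n := by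
          rw [norm_div, norm_pow, norm_cpow_eq_rpow_re_of_pos hy]
      _ ≤ y ^ a.re / (c * (1 + y)) ^ n := by
          gcongr
          exact hbd z hz y hy.le
      _ = (c ^ n)⁻¹ * (y ^ a.re / (1 + y) ^ n) := by
          rw [mul_pow]; field_simp
  have hF_int : IntegrableOn (fun y : ℝ => (y : ℂ) ^ a / (z₀ - y)) (Ioi 0) := by
    refine ((integrableOn_Ioi_rpow_div_one_add_pow (n := 1) h1 (by push_cast; linarith)).const_mul
      (c ^ 1)⁻¹).mono' ((hcpow.div (by fun_prop) (hne z₀ (mem_ball_self hr))).aestronglyMeasurable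
      measurableSet_Ioi) ?_
    filter_upwards [ae_restrict_mem measurableSet_Ioi] with y hy
    simpa using hdom 1 z₀ (mem_ball_self hr) y hy
  refine (hasDerivAt_integral_of_dominated_loc_of_deriv_le (μ := volume.restrict (Ioi 0))
    (F := fun z (y : ℝ) => (y : ℂ) ^ a / (z - y))
    (F' := fun z (y : ℝ) => -((y : ℂ) ^ a / (z - y) ^ 2))
    (bound := fun y => (c ^ 2)⁻¹ * (y ^ a.re / (1 + y) ^ 2)) (ball_mem_nhds z₀ hr)
    ?_ hF_int ?_ ?_ ?_ ?_).2.differentiableAt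
  · filter_upwards [ball_mem_nhds z₀ hr] with z hz
    exact (hcpow.div (by fun_prop) (hne z hz)).aestronglyMeasurable measurableSet_Ioi
  · exact (hcpow.div (by fun_prop) fun y hy => pow_ne_zero 2 (hne z₀ (mem_ball_self hr) y hy)).neg
      |>.aestronglyMeasurable measurableSet_Ioi
  · filter_upwards [ae_restrict_mem measurableSet_Ioi] with y hy z hz
    rw [norm_neg]
    exact hdom 2 z hz y hy
  · exact (integrableOn_Ioi_rpow_div_one_add_pow h1 (by push_cast; linarith)).const_mul _
  · filter_upwards [ae_restrict_mem measurableSet_Ioi] with y hy z hz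
    simpa [div_eq_mul_inv] using
      (((hasDerivAt_id z).sub_const (y : ℂ)).inv (hne z hz y hy)).const_mul ((y : ℂ) ^ a)

lemma integral_Ioi_eq_integral_Ioo_div_one_sub {E : Type*} [NormedAddCommGroup E]
    [NormedSpace ℝ E] (f : ℝ → E) :
    ∫ u in Ioi (0 : ℝ), f u = ∫ t in Ioo (0 : ℝ) 1, ((1 - t) ^ 2)⁻¹ • f (t / (1 - t)) := by
  have himage : (fun t : ℝ => t / (1 - t)) '' Ioo 0 1 = Ioi 0 := by
    ext u
    simp only [mem_image, mem_Ioo, mem_Ioi]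
    constructor
    · rintro ⟨t, ⟨ht0, ht1⟩, rfl⟩
      exact div_pos ht0 (by linarith)
    · intro hu
      refine ⟨u / (1 + u), ⟨by positivity, by rw [div_lt_one (by linarith)]; linarith⟩, ?_⟩
      field_simp
      ring
  have hderiv : ∀ t ∈ Ioo (0 : ℝ) 1,
      HasDerivWithinAt (fun t : ℝ => t / (1 - t)) ((1 - t) ^ 2)⁻¹ (Ioo 0 1) t := by
    rintro t ⟨-, ht1⟩
    have h1t : 1 - t ≠ 0 := by linarith
    refine (((hasDerivAt_id t).div ((hasDerivAt_id t).const_sub 1) h1t).congr_deriv ?_)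
      |>.hasDerivWithinAt
    simp only [id]
    field_simp
    ring
  have hinj : InjOn (fun t : ℝ => t / (1 - t)) (Ioo 0 1) := by
    rintro t ⟨-, ht⟩ s ⟨-, hs⟩ h
    rw [div_eq_div_iff (by linarith) (by linarith)] at h
    linarith
  rw [← himage, integral_image_eq_integral_abs_deriv_smul measurableSet_Ioo hderiv hinj]
  refine setIntegral_congr_fun measurableSet_Ioo fun t _ => ?_
  rw [abs_of_nonneg (by positivity)]

lemma integral_Ioi_cpow_sub_one_div_one_add {s : ℂ} (hs0 : 0 < s.re) (hs1 : s.re < 1) :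
    ∫ u in Ioi (0 : ℝ), (u : ℂ) ^ (s - 1) / (1 + u) = π / sin (π * s) := by
  rw [← Gamma_mul_Gamma_one_sub, Gamma_mul_Gamma_eq_betaIntegral hs0 (by simpa using hs1),
    add_sub_cancel, Gamma_one, one_mul, betaIntegral, intervalIntegral.integral_of_le zero_le_one,
    integral_Ioc_eq_integral_Ioo, integral_Ioi_eq_integral_Ioo_div_one_sub]
  refine setIntegral_congr_fun measurableSet_Ioo fun t ⟨ht0, ht1⟩ => ?_
  have h1t : (0 : ℝ) < 1 - t := by linarith
  have h1t' : ((1 - t : ℝ) : ℂ) ≠ 0 := ofReal_ne_zero.mpr h1t.ne'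
  have hbase : ((t / (1 - t) : ℝ) : ℂ) ^ (s - 1)
      = (t : ℂ) ^ (s - 1) * ((1 - t : ℝ) : ℂ) ^ (-(s - 1)) := by
    rw [div_eq_mul_inv, ofReal_mul, mul_cpow_ofReal_nonneg ht0.le (inv_nonneg.mpr h1t.le),
      ofReal_inv, inv_cpow _ _ (by rw [arg_ofReal_of_nonneg h1t.le]; exact Real.pi_pos.ne),
      ← cpow_neg]
  have hexp : ((1 - t : ℝ) : ℂ) ^ (1 - s - 1)
      = ((1 - t : ℝ) : ℂ) ^ (-(s - 1)) * ((1 - t : ℝ) : ℂ) ^ (-1 : ℂ) := by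
    rw [← cpow_add _ _ h1t']; ring_nf
  rw [Complex.real_smul, hbase, show (1 : ℂ) - t = ((1 - t : ℝ) : ℂ) by push_cast; ring, hexp,
    cpow_neg_one]
  push_cast at h1t' ⊢
  field_simp
  ring

lemma cauchyTransformCpow_neg_ofReal {a : ℂ} (h1 : -1 < a.re) (h2 : a.re < 0) {c : ℝ}
    (hc : 0 < c) : cauchyTransformCpow a (-c) = π / sin (π * a) * (c : ℂ) ^ a := by
  have hc' : (c : ℂ) ≠ 0 := ofReal_ne_zero.mpr hc.ne'
  have hscale := integral_comp_mul_left_Ioi' (fun y : ℝ => (y : ℂ) ^ a / (-c - y)) 0 hc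
  rw [mul_zero] at hscale
  have hpt : ∀ x ∈ Ioi (0 : ℝ), ((c * x : ℝ) : ℂ) ^ a / (-c - (c * x : ℝ))
      = -((c : ℂ) ^ a / c) * ((x : ℂ) ^ (a + 1 - 1) / (1 + x)) := by
    intro x (hx : 0 < x)
    have h1x : (1 + x : ℂ) ≠ 0 := by exact_mod_cast (by linarith : 1 + x ≠ 0)
    rw [ofReal_mul, mul_cpow_ofReal_nonneg hc.le hx.le, add_sub_cancel_right,
      show -(c : ℂ) - c * x = -(c * (1 + x)) by ring]
    field_simp
  have hsin : sin (π * (a + 1)) = -sin (π * a) := by rw [mul_add, mul_one, sin_add_pi]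
  rw [cauchyTransformCpow, ← hscale, setIntegral_congr_fun measurableSet_Ioi hpt,
    integral_const_mul, integral_Ioi_cpow_sub_one_div_one_add (by simp; linarith)
      (by simp; linarith), hsin, real_smul]
  field_simp

theorem cauchyTransformCpow_eq {a z : ℂ} (h1 : -1 < a.re) (h2 : a.re < 0) (hz : -z ∈ slitPlane) :
    cauchyTransformCpow a z = π / sin (π * a) * (-z) ^ a := by
  have hG : AnalyticOnNhd ℂ (cauchyTransformCpow a) (-slitPlane) :=
    DifferentiableOn.analyticOnNhd (fun w hw =>
      (differentiableAt_cauchyTransformCpow h1 h2 hw).differentiableWithinAt) isOpen_slitPlane.neg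
  have hH : AnalyticOnNhd ℂ (fun w => π / sin (π * a) * (-w) ^ a) (-slitPlane) :=
    DifferentiableOn.analyticOnNhd (fun w hw =>
      ((differentiableAt_id.neg.cpow_const hw).const_mul _).differentiableWithinAt)
      isOpen_slitPlane.neg
  have hreal : Tendsto ofReal (𝓝[≠] (-1)) (𝓝[≠] (-1 : ℂ)) := by
    have hmaps : MapsTo ofReal {-1}ᶜ {-1}ᶜ := fun t ht h => ht (by simpa using congrArg re h)
    simpa using continuous_ofReal.continuousWithinAt.tendsto_nhdsWithin (x := -1) hmaps
  have hfreq : ∃ᶠ w in 𝓝[≠] (-1 : ℂ), cauchyTransformCpow a w = π / sin (π * a) * (-w) ^ a := by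
    refine hreal.frequently (Eventually.frequently ?_)
    filter_upwards [nhdsWithin_le_nhds (eventually_lt_nhds (by norm_num : (-1 : ℝ) < 0))]
      with t ht
    simpa using cauchyTransformCpow_neg_ofReal h1 h2 (neg_pos.mpr ht)
  have hmem : (-1 : ℂ) ∈ -slitPlane := by simp [Set.mem_neg]
  have hconn : IsPreconnected (-slitPlane) :=
    (starConvex_one_slitPlane.neg.isPathConnected hmem).isConnected.isPreconnected
  exact hG.eqOn_of_preconnected_of_frequently_eq hH hconn hmem hfreq hz

lemma neg_cpow_of_im_pos {z : ℂ} (hz : 0 < z.im) (a : ℂ) :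
    (-z) ^ a = exp (-I * π * a) * z ^ a := by
  have hz0 : z ≠ 0 := fun h => by simp [h] at hz
  have hlog : log (-z) = log z - π * I := by
    rw [log, log, norm_neg, arg_neg_eq_arg_sub_pi_of_im_pos hz]
    push_cast
    ring
  rw [cpow_def_of_ne_zero (neg_ne_zero.mpr hz0), cpow_def_of_ne_zero hz0, hlog, ← exp_add]
  ring_nf

theorem stmt_5 (a : ℂ) (h1 : -1 < a.re) (h2 : a.re < 0) (ε : ℝ) (hε : 0 < ε) (x : ℝ) :
    ∫ y in Set.Ioi (0:ℝ), (y : ℂ) ^ a / ((x : ℂ) - (y : ℂ) + Complex.I * (ε : ℂ))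
      = (Real.pi : ℂ) / Complex.sin ((Real.pi : ℂ) * a) * Complex.exp (-Complex.I * Real.pi * a)
          * ((x : ℂ) + Complex.I * (ε : ℂ)) ^ a := by
  have hz : 0 < (x + I * ε : ℂ).im := by simpa using hε
  have hslit : -(x + I * ε : ℂ) ∈ slitPlane := mem_slitPlane_iff.mpr (Or.inr (by simp; linarith))
  calc ∫ y in Ioi (0:ℝ), (y : ℂ) ^ a / (x - y + I * ε)
      = cauchyTransformCpow a (x + I * ε) :=
        setIntegral_congr_fun measurableSet_Ioi fun y _ => by ring_nf
    _ = _ := by rw [cauchyTransformCpow_eq h1 h2 hslit, neg_cpow_of_im_pos hz]; ring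
end

section
/- Let σ ∈ (0,1), N > 1, C > 0, and let g : ℝ → ℂ satisfy g(ξ) = σ^{-1} g(ξ/σ) for all ξ ∈ ℝ, and |g(ξ)| ≤ C |ξ|^{-N} for all ξ ≤ -1. Then g(ξ) = 0 for every ξ < 0. -/
theorem stmt_16 (σ : ℝ) (h1 : 0 < σ) (h2 : σ < 1) (N C : ℝ) (hN : 1 < N) (hC : 0 < C)
    (g : ℝ → ℂ) (hscale : ∀ ξ : ℝ, g ξ = (σ : ℂ)⁻¹ * g (ξ / σ))
    (hdecay : ∀ ξ : ℝ, ξ ≤ -1 → ‖g ξ‖ ≤ C * |ξ| ^ (-N)) :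
    ∀ ξ : ℝ, ξ < 0 → g ξ = 0 := by
  intro ξ hξ
  -- iterated scaling
  have hiter : ∀ n : ℕ, g ξ = ((σ : ℂ) ^ n)⁻¹ * g (ξ / σ ^ n) := by
    intro n
    induction n with
    | zero => simp
    | succ n ih =>
      rw [ih, hscale (ξ / σ ^ n)]
      have : ξ / σ ^ n / σ = ξ / σ ^ (n + 1) := by
        rw [div_div, ← pow_succ]
      rw [this]
      ring
  have hσn : Filter.Tendsto (fun n : ℕ => σ ^ n) Filter.atTop (nhds 0) :=
    tendsto_pow_atTop_nhds_zero_of_lt_one h1.le h2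
  -- bound for large n
  have hbound : ∀ n : ℕ, σ ^ n ≤ -ξ →
      ‖g ξ‖ ≤ C * |ξ| ^ (-N) * (σ ^ n) ^ (N - 1) := by
    intro n hn
    have hσpos : (0:ℝ) < σ ^ n := pow_pos h1 n
    have hle : ξ / σ ^ n ≤ -1 := by
      rw [div_le_iff₀ hσpos]
      linarith
    have h := hdecay _ hle
    have habs : |ξ / σ ^ n| = |ξ| / σ ^ n := by
      rw [abs_div, abs_of_pos hσpos]
    rw [habs] at h
    have hξabs : (0:ℝ) < |ξ| := abs_pos.mpr (ne_of_lt hξ)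
    have hrw : (|ξ| / σ ^ n) ^ (-N) = |ξ| ^ (-N) * (σ ^ n) ^ N := by
      rw [Real.div_rpow hξabs.le hσpos.le, Real.rpow_neg hσpos.le]; field_simp
    rw [hiter n]
    rw [norm_mul, norm_inv]
    have : ‖(σ : ℂ) ^ n‖ = σ ^ n := by
      rw [norm_pow, Complex.norm_real, Real.norm_eq_abs, abs_of_pos h1]
    rw [this]
    calc (σ ^ n)⁻¹ * ‖g (ξ / σ ^ n)‖
        ≤ (σ ^ n)⁻¹ * (C * (|ξ| / σ ^ n) ^ (-N)) := by
          apply mul_le_mul_of_nonneg_left h (by positivity)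
      _ = C * |ξ| ^ (-N) * (σ ^ n) ^ (N - 1) := by
          rw [hrw]
          rw [show N = (N - 1) + 1 by ring, Real.rpow_add hσpos, Real.rpow_one]
          field_simp
          ring
  -- take limit
  have hlim : Filter.Tendsto (fun n : ℕ => C * |ξ| ^ (-N) * (σ ^ n) ^ (N - 1))
      Filter.atTop (nhds 0) := by
    have h0 : Filter.Tendsto (fun n : ℕ => (σ ^ n) ^ (N - 1)) Filter.atTop (nhds 0) := by
      have := hσn.rpow_const (p := N - 1) (Or.inr (by linarith))
      simpa [Real.zero_rpow (show N - 1 ≠ 0 by linarith)] using this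
    have := h0.const_mul (C * |ξ| ^ (-N))
    simpa [mul_comm, mul_assoc] using this
  have hev : ∀ᶠ n : ℕ in Filter.atTop, ‖g ξ‖ ≤ C * |ξ| ^ (-N) * (σ ^ n) ^ (N - 1) := by
    have : ∀ᶠ n : ℕ in Filter.atTop, σ ^ n ≤ -ξ := by
      have := hσn.eventually (eventually_le_nhds (show (0:ℝ) < -ξ by linarith))
      exact this
    filter_upwards [this] with n hn using hbound n hn
  have : ‖g ξ‖ ≤ 0 :=
    ge_of_tendsto hlim hev
  have := le_antisymm this (norm_nonneg _)
  exact norm_eq_zero.mp this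
end
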